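/- arXiv:2002.10303 — 9 statements merged into one kernel-verified Lean document; each statement's English description precedes it below -/
import Mathlib

section
/- Let (L, <) be a linear order and let C be a family of non-empty convex subsets of L with the prefix/suffix property (i.e., whenever I, J ∈ C and I ⊆ J, either every element of I is less than every element of J \ I, or every element of J \ I is less than every element of I). Define I <ⁱ J iff (∃x ∈ I, ∀y ∈ J, x < y) ∨ (∃y ∈ J, ∀x ∈ I, x < y). Then <ⁱ is a strict linear order on C. -/
/-- A set `I` is convex in a linear order. -/
def IsConvexSet {L : Type*} [LinearOrder L] (I : Set L) : Prop :=
  ∀ ⦃x x' y : L⦄, x ∈ I → x' ∈ I → x < y → y < x' → y ∈ I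

/-- A family of sets has the prefix/suffix property. -/
def PrefixSuffixFamily {L : Type*} [LinearOrder L] (C : Set (Set L)) : Prop :=
  ∀ I ∈ C, ∀ J ∈ C, I ⊆ J →
    (∀ x ∈ I, ∀ y ∈ J \ I, x < y) ∨ (∀ y ∈ J \ I, ∀ x ∈ I, y < x)

/-- The order `<ⁱ` on sets. -/
def ltI {L : Type*} [LinearOrder L] (I J : Set L) : Prop :=
  (∃ x ∈ I, ∀ y ∈ J, x < y) ∨ (∃ y ∈ J, ∀ x ∈ I, x < y)

/-!
`I <ⁱ J` says that `I` starts before `J` (some point of `I` lies below all of `J`) or ends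
before it (some point of `J` lies above all of `I`). Irreflexivity is clear, and if neither
`I <ⁱ J` nor `J <ⁱ I`, each of `I`, `J` lies between points of the other, so convexity forces
`I = J`. For transitivity, "starts before" and "ends before" are each transitive; the two mixed
cases reduce to the fact that a member `J ⊆ I` of a prefix/suffix family cannot have points of
`I` strictly below and strictly above it, because `J` is then neither a prefix nor a suffix of `I`.
-/

section

variable {L : Type*} [LinearOrder L] {C : Set (Set L)} {I J K : Set L}

def StartsBefore (I J : Set L) : Prop := ∃ x ∈ I, ∀ y ∈ J, x < y

def EndsBefore (I J : Set L) : Prop := ∃ y ∈ J, ∀ x ∈ I, x < y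

theorem ltI_iff : ltI I J ↔ StartsBefore I J ∨ EndsBefore I J := Iff.rfl

theorem not_startsBefore_iff : ¬StartsBefore I J ↔ ∀ x ∈ I, ∃ y ∈ J, y ≤ x := by
  simp [StartsBefore]

theorem not_endsBefore_iff : ¬EndsBefore I J ↔ ∀ y ∈ J, ∃ x ∈ I, y ≤ x := by
  simp [EndsBefore]

theorem StartsBefore.trans (hIJ : StartsBefore I J) (hJK : StartsBefore J K) :
    StartsBefore I K := by
  obtain ⟨x, hxI, hx⟩ := hIJ
  obtain ⟨x', hx'J, hx'⟩ := hJK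
  exact ⟨x, hxI, fun z hz => (hx x' hx'J).trans (hx' z hz)⟩

theorem EndsBefore.trans (hIJ : EndsBefore I J) (hJK : EndsBefore J K) : EndsBefore I K := by
  obtain ⟨y, hyJ, hy⟩ := hIJ
  obtain ⟨z, hzK, hz⟩ := hJK
  exact ⟨z, hzK, fun x hx => (hy x hx).trans (hz y hyJ)⟩

theorem IsConvexSet.ordConnected (h : IsConvexSet I) : I.OrdConnected := by
  refine ⟨fun x hx x' hx' y ⟨hxy, hyx'⟩ => ?_⟩
  rcases hxy.eq_or_lt with rfl | hxy
  · exact hx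
  rcases hyx'.eq_or_lt with rfl | hyx'
  · exact hx'
  exact h hx hx' hxy hyx'

theorem subset_of_not_startsBefore_of_not_endsBefore (hJ : J.OrdConnected)
    (h₁ : ¬StartsBefore I J) (h₂ : ¬EndsBefore J I) : I ⊆ J := by
  intro x hx
  obtain ⟨y, hyJ, hyx⟩ := not_startsBefore_iff.1 h₁ x hx
  obtain ⟨y', hy'J, hxy'⟩ := not_endsBefore_iff.1 h₂ x hx
  exact hJ.out hyJ hy'J ⟨hyx, hxy'⟩

theorem eq_of_not_ltI_of_not_ltI (hI : I.OrdConnected) (hJ : J.OrdConnected)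
    (h₁ : ¬ltI I J) (h₂ : ¬ltI J I) : I = J := by
  rw [ltI_iff, not_or] at h₁ h₂
  exact (subset_of_not_startsBefore_of_not_endsBefore hJ h₁.1 h₂.2).antisymm
    (subset_of_not_startsBefore_of_not_endsBefore hI h₂.1 h₁.2)

theorem ltI_irrefl (I : Set L) : ¬ltI I I := by
  rintro (⟨x, hx, h⟩ | ⟨y, hy, h⟩)
  · exact (h x hx).false
  · exact (h y hy).false

namespace PrefixSuffixFamily

theorem lt_of_mem_diff (hps : PrefixSuffixFamily C) (hI : I ∈ C) (hJ : J ∈ C) (hIJ : I ⊆ J)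
    (hIne : I.Nonempty) (hend : EndsBefore I J) : ∀ x ∈ I, ∀ y ∈ J \ I, x < y := by
  refine (hps I hI J hJ hIJ).resolve_right fun hsuf => ?_
  obtain ⟨y, hyJ, hy⟩ := hend
  obtain ⟨x, hx⟩ := hIne
  exact (hy x hx).asymm (hsuf y ⟨hyJ, fun hyI => (hy y hyI).false⟩ x hx)

theorem mem_diff_lt (hps : PrefixSuffixFamily C) (hI : I ∈ C) (hJ : J ∈ C) (hIJ : I ⊆ J)
    (hIne : I.Nonempty) (hstart : StartsBefore J I) : ∀ y ∈ J \ I, ∀ x ∈ I, y < x := by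
  refine (hps I hI J hJ hIJ).resolve_left fun hpre => ?_
  obtain ⟨y, hyJ, hy⟩ := hstart
  obtain ⟨x, hx⟩ := hIne
  exact (hy x hx).asymm (hpre x hx y ⟨hyJ, fun hyI => (hy y hyI).false⟩)

theorem not_endsBefore_of_startsBefore (hps : PrefixSuffixFamily C) (hI : I ∈ C) (hJ : J ∈ C)
    (hJI : J ⊆ I) (hJne : J.Nonempty) (hstart : StartsBefore I J) : ¬EndsBefore J I := by
  intro hend
  obtain ⟨x, hxI, hx⟩ := hstart
  obtain ⟨y, hyJ⟩ := hJne
  exact (hx y hyJ).asymm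
    (hps.lt_of_mem_diff hJ hI hJI ⟨y, hyJ⟩ hend y hyJ x ⟨hxI, fun hxJ => (hx x hxJ).false⟩)

theorem endsBefore_of_startsBefore_of_endsBefore (hps : PrefixSuffixFamily C) (hI : I ∈ C)
    (hJ : J ∈ C) (hIconv : I.OrdConnected) (hJne : J.Nonempty)
    (hIJ : StartsBefore I J) (hJK : EndsBefore J K) : EndsBefore I K := by
  by_contra hIK
  have ⟨x, hxI, hx⟩ := hIJ
  obtain ⟨z, hzK, hz⟩ := hJK
  obtain ⟨a, haI, hza⟩ := not_endsBefore_iff.1 hIK z hzK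
  have hJI : J ⊆ I := fun y hy => hIconv.out hxI haI ⟨(hx y hy).le, (hz y hy).le.trans hza⟩
  exact hps.not_endsBefore_of_startsBefore hI hJ hJI hJne hIJ
    ⟨a, haI, fun y hy => (hz y hy).trans_le hza⟩

theorem ltI_of_endsBefore_of_startsBefore (hps : PrefixSuffixFamily C) (hI : I ∈ C) (hJ : J ∈ C)
    (hK : K ∈ C)     (hJconv : J.OrdConnected) (hIne : I.Nonempty) (hKne : K.Nonempty)
    (hIJ : EndsBefore I J) (hJK : StartsBefore J K) : ltI I K := by
  by_contra hIK
  rw [ltI_iff, not_or, not_startsBefore_iff, not_endsBefore_iff] at hIK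
  obtain ⟨hIK, hKI⟩ := hIK
  have ⟨y, hyJ, hy⟩ := hIJ
  have ⟨x, hxJ, hx⟩ := hJK
  have hIsubJ : I ⊆ J := fun a ha =>
    let ⟨c, hcK, hca⟩ := hIK a ha
    hJconv.out hxJ hyJ ⟨((hx c hcK).trans_le hca).le, (hy a ha).le⟩
  have hKsubJ : K ⊆ J := fun c hc =>
    let ⟨a, haI, hca⟩ := hKI c hc
    hJconv.out hxJ hyJ ⟨(hx c hc).le, hca.trans (hy a haI).le⟩
  have hpre := hps.lt_of_mem_diff hI hJ hIsubJ hIne hIJ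
  have hsuf := hps.mem_diff_lt hK hJ hKsubJ hKne hJK
  -- `I` is a prefix and `K` a suffix of `J`, and neither reaches past the other: so `I = K`.
  have hIeqK : I = K := by
    refine Set.Subset.antisymm (fun a ha => ?_) (fun c hc => ?_) <;> by_contra hnot
    · obtain ⟨c, hcK, hca⟩ := hIK a ha
      exact (hsuf a ⟨hIsubJ ha, hnot⟩ c hcK).not_ge hca
    · obtain ⟨a, haI, hca⟩ := hKI c hc
      exact (hpre a haI c ⟨hKsubJ hc, hnot⟩).not_ge hca
  subst hIeqK
  exact hps.not_endsBefore_of_startsBefore hJ hI hIsubJ hIne hJK hIJ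

theorem ltI_trans (hps : PrefixSuffixFamily C) (hne : ∀ I ∈ C, I.Nonempty)
    (hconv : ∀ I ∈ C, I.OrdConnected) (hI : I ∈ C) (hJ : J ∈ C) (hK : K ∈ C)
    (hIJ : ltI I J) (hJK : ltI J K) : ltI I K := by
  rcases ltI_iff.1 hIJ with hIJ | hIJ <;> rcases ltI_iff.1 hJK with hJK | hJK
  · exact Or.inl (hIJ.trans hJK)
  · exact Or.inr <|
      hps.endsBefore_of_startsBefore_of_endsBefore hI hJ (hconv I hI) (hne J hJ) hIJ hJK
  · exact hps.ltI_of_endsBefore_of_startsBefore hI hJ hK (hconv J hJ) (hne I hI) (hne K hK) hIJ hJK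
  · exact Or.inr (hIJ.trans hJK)

end PrefixSuffixFamily

end

/-- `<ⁱ` is a strict linear order on a prefix/suffix family of non-empty convex sets:
it is irreflexive, transitive, and total (connected) on `C`. -/
theorem ltI_strict_linear_order {L : Type*} [LinearOrder L] (C : Set (Set L))
    (hne : ∀ I ∈ C, (I : Set L).Nonempty)
    (hconv : ∀ I ∈ C, IsConvexSet I)
    (hps : PrefixSuffixFamily C) :
    (∀ I ∈ C, ¬ ltI I I) ∧
    (∀ I ∈ C, ∀ J ∈ C, ∀ K ∈ C, ltI I J → ltI J K → ltI I K) ∧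
    (∀ I ∈ C, ∀ J ∈ C, I ≠ J → ltI I J ∨ ltI J I) := by
  have hord : ∀ I ∈ C, I.OrdConnected := fun I hI => (hconv I hI).ordConnected
  refine ⟨fun I _ => ltI_irrefl I, fun I hI J hJ K hK => hps.ltI_trans hne hord hI hJ hK, ?_⟩
  intro I hI J hJ hIJ
  by_contra h
  rw [not_or] at h
  exact hIJ (eq_of_not_ltI_of_not_ltI (hord I hI) (hord J hJ) h.1 h.2)
end

section
/- Let (L, <) be a finite linear order of cardinality n ≥ 1, and let C be a family of non-empty convex subsets of L with the prefix/suffix property. Then |C| ≤ 2n − 1. -/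
/-!
A non-empty convex subset of a finite linear order is an interval `[a, b]`. The prefix/suffix
property forbids strict nesting of two members `[a, b] ⊊ [a', b']` with `a' < a` and `b < b'`,
so two distinct members with the same value of `rank a + rank b` cannot exist: one would start
earlier and end later than the other. As ranks lie in `[0, n - 1]`, the sum takes at most
`2n - 1` values.
-/

open Set

theorem IsConvexSet.exists_eq_Icc {L : Type*} [LinearOrder L] {I : Set L} (hI : IsConvexSet I)
    (hfin : I.Finite) (hne : I.Nonempty) : ∃ a b, I = Icc a b := by
  obtain ⟨a, ha, hmin⟩ := I.exists_min_image id hfin hne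
  obtain ⟨b, hb, hmax⟩ := I.exists_max_image id hfin hne
  refine ⟨a, b, Set.ext fun x => ⟨fun hx => ⟨hmin x hx, hmax x hx⟩, ?_⟩⟩
  rintro ⟨hax, hxb⟩
  rcases hax.eq_or_lt with rfl | hax
  · exact ha
  rcases hxb.eq_or_lt with rfl | hxb
  · exact hb
  exact hI ha hb hax hxb

theorem PrefixSuffixFamily.le_of_lt_of_Icc_mem {L : Type*} [LinearOrder L] {C : Set (Set L)}
    (hps : PrefixSuffixFamily C) {a b a' b' : L} (hI : Icc a b ∈ C) (hJ : Icc a' b' ∈ C)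
    (hab : a ≤ b) (ha : a' < a) : b' ≤ b := by
  by_contra! hb
  have hsub : Icc a b ⊆ Icc a' b' := Icc_subset_Icc ha.le hb.le
  rcases hps _ hI _ hJ hsub with hbelow | habove
  · exact (hbelow a ⟨le_rfl, hab⟩ a' ⟨⟨le_rfl, ha.le.trans (hab.trans hb.le)⟩,
      fun h => ha.not_ge h.1⟩).not_gt ha
  · exact (habove b' ⟨⟨(ha.le.trans hab).trans hb.le, le_rfl⟩, fun h => hb.not_ge h.2⟩
      b ⟨hab, le_rfl⟩).not_gt hb

theorem StrictMono.injOn_add_of_not_nested {L M : Type*} [LinearOrder L] [AddCommMonoid M]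
    [LinearOrder M] [IsOrderedCancelAddMonoid M] {r : L → M} (hr : StrictMono r) {S : Set (L × L)}
    (hS : ∀ p ∈ S, ∀ q ∈ S, p.1 < q.1 → p.2 ≤ q.2) :
    S.InjOn fun p => r p.1 + r p.2 := by
  have key : ∀ p ∈ S, ∀ q ∈ S, p.1 < q.1 → r p.1 + r p.2 < r q.1 + r q.2 := fun p hp q hq h =>
    add_lt_add_of_lt_of_le (hr h) (hr.monotone (hS p hp q hq h))
  intro p hp q hq hpq
  dsimp only at hpq
  rcases lt_trichotomy p.1 q.1 with h | h | h
  · exact absurd hpq (key p hp q hq h).ne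
  · exact Prod.ext h (hr.injective (add_left_cancel (a := r p.1) (by rwa [h] at hpq ⊢)))
  · exact absurd hpq (key q hq p hp h).ne'

theorem card_prefixSuffixFamily_le_general {L : Type*} [Fintype L] [LinearOrder L]
    (C : Set (Set L))
    (hne : ∀ I ∈ C, (I : Set L).Nonempty)
    (hconv : ∀ I ∈ C, IsConvexSet I)
    (hps : PrefixSuffixFamily C) :
    C.ncard ≤ 2 * Fintype.card L - 1 := by
  set P : Set (L × L) := {p | Icc p.1 p.2 ∈ C}
  have hCP : C ⊆ (fun p : L × L => Icc p.1 p.2) '' P := fun I hI => by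
    obtain ⟨a, b, rfl⟩ := (hconv I hI).exists_eq_Icc I.toFinite (hne I hI)
    exact ⟨(a, b), hI, rfl⟩
  let e : L ≃o Fin (Fintype.card L) := (Fintype.orderIsoFinOfCardEq L rfl).symm
  have hinj : P.InjOn fun p => (e p.1 : ℕ) + e p.2 :=
    (Fin.val_strictMono.comp e.strictMono).injOn_add_of_not_nested
      fun p hp q hq h => hps.le_of_lt_of_Icc_mem hq hp (nonempty_Icc.mp (hne _ hq)) h
  have hmaps : ∀ p ∈ P, (e p.1 : ℕ) + e p.2 ∈ (Finset.range (2 * Fintype.card L - 1) : Set ℕ) :=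
    fun p _ => by
      have := (e p.1).is_lt
      have := (e p.2).is_lt
      rw [Finset.coe_range, mem_Iio]
      omega
  calc C.ncard ≤ ((fun p : L × L => Icc p.1 p.2) '' P).ncard := ncard_le_ncard hCP
    _ ≤ P.ncard := ncard_image_le
    _ ≤ (Finset.range (2 * Fintype.card L - 1) : Set ℕ).ncard :=
      ncard_le_ncard_of_injOn _ hmaps hinj (Finset.finite_toSet _)
    _ = 2 * Fintype.card L - 1 := by rw [ncard_coe_finset, Finset.card_range]

/-- On a finite linear order of cardinality `n ≥ 1`, any prefix/suffix family of
non-empty convex sets has at most `2n - 1` members. -/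
theorem card_prefixSuffixFamily_le {L : Type*} [Fintype L] [LinearOrder L]
    (hn : 1 ≤ Fintype.card L)
    (C : Set (Set L))
    (hne : ∀ I ∈ C, (I : Set L).Nonempty)
    (hconv : ∀ I ∈ C, IsConvexSet I)
    (hps : PrefixSuffixFamily C) :
    C.ncard ≤ 2 * Fintype.card L - 1 :=
  card_prefixSuffixFamily_le_general C hne hconv hps
end

section
/- Let (L, <) be a finite linear order and let C be a family of non-empty convex subsets with the prefix/suffix property. Then for I, J ∈ C, I <ⁱ J holds if and only if min(I) + max(I) < min(J) + max(J), where elements are identified with their rank in a bijection of L with {1, …, n}. -/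
/-!
`I <ⁱ J` just says `min I < min J ∨ max I < max J`. The prefix/suffix property forbids one
interval of the family from lying strictly inside another one (their difference would contain
elements on both sides), so the two intervals never cross: the minima and maxima compare the
same way, and comparing either one is comparing the sums.
-/

section LinearOrder

variable {L : Type*} [LinearOrder L] {I J : Set L} {a b c d : L}

theorem ltI_iff_lt_or_lt (ha : IsLeast I a) (hb : IsGreatest I b) (hc : IsLeast J c)
    (hd : IsGreatest J d) : ltI I J ↔ a < c ∨ b < d := by
  constructor
  · rintro (⟨x, hx, hxJ⟩ | ⟨y, hy, hIy⟩)
    · exact Or.inl ((ha.2 hx).trans_lt (hxJ c hc.1))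
    · exact Or.inr ((hIy b hb.1).trans_le (hd.2 hy))
  · rintro (hac | hbd)
    · exact Or.inl ⟨a, ha.1, fun y hy => hac.trans_le (hc.2 hy)⟩
    · exact Or.inr ⟨d, hd.1, fun x hx => (hb.2 hx).trans_lt hbd⟩

theorem IsConvexSet.Ioo_subset (hJ : IsConvexSet J) (hc : c ∈ J) (hd : d ∈ J) :
    Set.Ioo c d ⊆ J :=
  fun _ hy => hJ hc hd hy.1 hy.2

theorem PrefixSuffixFamily.not_lt_and_lt {C : Set (Set L)} (hps : PrefixSuffixFamily C)
    (hI : I ∈ C) (hJ : J ∈ C) (hJconv : IsConvexSet J) (ha : IsLeast I a) (hb : IsGreatest I b)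
    (hc : IsLeast J c) (hd : IsGreatest J d) : ¬(c < a ∧ b < d) := by
  rintro ⟨hca, hbd⟩
  have hIJ : I ⊆ J := fun x hx =>
    hJconv.Ioo_subset hc.1 hd.1 ⟨hca.trans_le (ha.2 hx), (hb.2 hx).trans_lt hbd⟩
  have hc_out : c ∈ J \ I := ⟨hc.1, fun hcI => (ha.2 hcI).not_gt hca⟩
  have hd_out : d ∈ J \ I := ⟨hd.1, fun hdI => (hb.2 hdI).not_gt hbd⟩
  rcases hps I hI J hJ hIJ with hprefix | hsuffix
  · exact (hprefix a ha.1 c hc_out).not_gt hca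
  · exact (hsuffix d hd_out b hb.1).not_gt hbd

end LinearOrder

theorem lt_or_lt_iff_add_lt_add {α : Type*} [AddCommMonoid α] [LinearOrder α]
    [IsOrderedCancelAddMonoid α] {a b c d : α} (hIJ : ¬(c < a ∧ b < d))
    (hJI : ¬(a < c ∧ d < b)) : a < c ∨ b < d ↔ a + b < c + d := by
  constructor
  · rintro (hac | hbd)
    · exact add_lt_add_of_lt_of_le hac (not_lt.1 fun hdb => hJI ⟨hac, hdb⟩)
    · exact add_lt_add_of_le_of_lt (not_lt.1 fun hca => hIJ ⟨hca, hbd⟩) hbd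
  · intro hsum
    by_contra! hle
    exact (add_le_add hle.1 hle.2).not_gt hsum

theorem ltI_iff_min_add_max_general {n : ℕ} (C : Set (Set (Fin n)))
    (hconv : ∀ I ∈ C, IsConvexSet I)
    (hps : PrefixSuffixFamily C)
    (I J : Set (Fin n)) (hI : I ∈ C) (hJ : J ∈ C)
    (mI MI mJ MJ : Fin n)
    (hmI : IsLeast I mI) (hMI : IsGreatest I MI)
    (hmJ : IsLeast J mJ) (hMJ : IsGreatest J MJ) :
    ltI I J ↔ (mI : ℕ) + (MI : ℕ) < (mJ : ℕ) + (MJ : ℕ) := by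
  have hIJ := hps.not_lt_and_lt hI hJ (hconv J hJ) hmI hMI hmJ hMJ
  have hJI := hps.not_lt_and_lt hJ hI (hconv I hI) hmJ hMJ hmI hMI
  simp only [Fin.lt_def] at hIJ hJI
  rw [ltI_iff_lt_or_lt hmI hMI hmJ hMJ, Fin.lt_def, Fin.lt_def]
  exact lt_or_lt_iff_add_lt_add hIJ hJI

/-- On a finite linear order (identified with `Fin n` via ranks), for members `I, J` of a
prefix/suffix family of non-empty convex sets, `I <ⁱ J` iff `min I + max I < min J + max J`. -/
theorem ltI_iff_min_add_max {n : ℕ} (C : Set (Set (Fin n)))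
    (hne : ∀ I ∈ C, (I : Set (Fin n)).Nonempty)
    (hconv : ∀ I ∈ C, IsConvexSet I)
    (hps : PrefixSuffixFamily C)
    (I J : Set (Fin n)) (hI : I ∈ C) (hJ : J ∈ C)
    (mI MI mJ MJ : Fin n)
    (hmI : IsLeast I mI) (hMI : IsGreatest I MI)
    (hmJ : IsLeast J mJ) (hMJ : IsGreatest J MJ) :
    ltI I J ↔ (mI : ℕ) + (MI : ℕ) < (mJ : ℕ) + (MJ : ℕ) :=
  ltI_iff_min_add_max_general C hconv hps I J hI hJ mI MI mJ MJ hmI hMI hmJ hMJ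
end

section
/- In a Wheeler NFA A, for every state u, the set I_u = {α ∈ Pref(L(A)) : u ∈ δ(s, α)} is a convex subset of (Pref(L(A)), ≺), where ≺ is the co-lexicographic order. -/
/-- The co-lexicographic (strict) order on strings. -/
def StrColex {α : Type*} [LinearOrder α] (x y : List α) : Prop :=
  List.Lex (· < ·) x.reverse y.reverse

/-- A Wheeler NFA: an NFA with a linear order on states whose minimum is the initial
state `s`, `s` has no incoming edges, and the two Wheeler properties hold. -/
structure WNFA (α Q : Type*) [LinearOrder α] [LinearOrder Q] where
  δ : Q → α → Set Q
  s : Q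
  F : Set Q
  s_min : ∀ q : Q, s ≤ q
  s_no_incoming : ∀ (u : Q) (a : α), s ∉ δ u a
  wheeler_i : ∀ ⦃u₁ u₂ : Q⦄ ⦃a₁ a₂ : α⦄ ⦃v₁ v₂ : Q⦄,
    v₁ ∈ δ u₁ a₁ → v₂ ∈ δ u₂ a₂ → a₁ < a₂ → v₁ < v₂
  wheeler_ii : ∀ ⦃u₁ u₂ : Q⦄ ⦃a : α⦄ ⦃v₁ v₂ : Q⦄,
    v₁ ∈ δ u₁ a → v₂ ∈ δ u₂ a → u₁ < u₂ → v₁ ≤ v₂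

namespace WNFA

variable {α Q : Type*} [LinearOrder α] [LinearOrder Q]

/-- The transition function extended to strings. -/
def δStar (A : WNFA α Q) : Q → List α → Set Q
  | q, [] => {q}
  | q, a :: w => {p | ∃ v ∈ A.δ q a, p ∈ A.δStar v w}

/-- The language accepted by the automaton. -/
def lang (A : WNFA α Q) : Set (List α) := {w | ∃ q ∈ A.F, q ∈ A.δStar A.s w}

/-- The set of prefixes of accepted words: the strings the automaton can read. -/
def Pref (A : WNFA α Q) : Set (List α) := {x | ∃ y, x ++ y ∈ A.lang}

/-- `I_u`: the set of readable strings reaching state `u` from the initial state. -/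
def Iu (A : WNFA α Q) (u : Q) : Set (List α) := {x | x ∈ A.Pref ∧ u ∈ A.δStar A.s x}

end WNFA

/-!
If `x ≺ y` co-lexicographically while `y` reaches a state `q` strictly below a state `p`
reached by `x`, then `x` and `y` both reach `p` and `q`. Peel off the last letters: the Wheeler
axioms forbid a smaller last letter for `y` and force the predecessors of `q` and `p` (read
on the remaining prefixes, again ordered by `≺`) to coincide or to cross in the same way.
Convexity follows: a state `v` reached by `y` is compared with `u`, and the crossing property
is applied to `x, y` if `v < u` and to `y, z` if `u < v`.
-/

namespace WNFA

variable {α Q : Type*} [LinearOrder α] [LinearOrder Q] (A : WNFA α Q)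

lemma mem_δStar_append {q p : Q} {x w : List α} :
    p ∈ A.δStar q (x ++ w) ↔ ∃ r ∈ A.δStar q x, p ∈ A.δStar r w := by
  induction x generalizing q with
  | nil => simp [δStar]
  | cons a x ih =>
    simp only [List.cons_append, δStar, Set.mem_ofPred_eq, ih]
    exact ⟨fun ⟨v, hv, r, hr, hp⟩ => ⟨r, ⟨v, hv, hr⟩, hp⟩,
      fun ⟨r, ⟨v, hv, hr⟩, hp⟩ => ⟨v, hv, r, hr, hp⟩⟩

lemma mem_δStar_append_singleton {q p : Q} {x : List α} {a : α} :
    p ∈ A.δStar q (x ++ [a]) ↔ ∃ r ∈ A.δStar q x, p ∈ A.δ r a := by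
  simp [mem_δStar_append, δStar]

lemma nonempty_δStar_of_mem_Pref {x : List α} (hx : x ∈ A.Pref) :
    (A.δStar A.s x).Nonempty := by
  obtain ⟨w, _, -, hq⟩ := hx
  obtain ⟨v, hv, -⟩ := A.mem_δStar_append.mp hq
  exact ⟨v, hv⟩

lemma le_of_mem_δ_of_lt {p q p' q' : Q} {a : α} (hp : p ∈ A.δ p' a) (hq : q ∈ A.δ q' a)
    (hlt : q < p) : q' ≤ p' :=
  le_of_not_gt fun h => (A.wheeler_ii hp hq h).not_gt hlt

lemma mem_δStar_swap_of_strColex {x y : List α} {p q : Q} (hxy : StrColex x y)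
    (hp : p ∈ A.δStar A.s x) (hq : q ∈ A.δStar A.s y) (hlt : q < p) :
    p ∈ A.δStar A.s y ∧ q ∈ A.δStar A.s x := by
  induction x using List.reverseRecOn generalizing y p q with
  | nil =>
    rw [δStar, Set.mem_singleton_iff] at hp
    exact absurd (hp ▸ A.s_min q) hlt.not_ge
  | append_singleton x' a ih =>
    rcases y.eq_nil_or_concat with rfl | ⟨y', b, rfl⟩
    · exact absurd hxy List.not_lex_nil
    rw [List.concat_eq_append] at hq hxy ⊢
    simp only [mem_δStar_append_singleton] at hp hq ⊢
    obtain ⟨p', hp', hpa⟩ := hp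
    obtain ⟨q', hq', hqb⟩ := hq
    rw [StrColex, List.reverse_concat', List.reverse_concat'] at hxy
    cases hxy with
    | rel hab => exact absurd (A.wheeler_i hpa hqb hab) hlt.not_gt
    | cons hxy' =>
      rcases (A.le_of_mem_δ_of_lt hpa hqb hlt).eq_or_lt with rfl | hq'p'
      · exact ⟨⟨q', hq', hpa⟩, ⟨q', hp', hqb⟩⟩
      · obtain ⟨hp'y', hq'x'⟩ := ih hxy' hp' hq' hq'p'
        exact ⟨⟨p', hp'y', hpa⟩, ⟨q', hq'x', hqb⟩⟩

end WNFA

/-- In a Wheeler NFA, for each state `u` the set `I_u` is convex in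
`(Pref(L(A)), ≺)` with `≺` the co-lexicographic order. -/
theorem Iu_convex {α Q : Type*} [LinearOrder α] [LinearOrder Q]
    (A : WNFA α Q) (u : Q) (x y z : List α)
    (hx : x ∈ A.Iu u) (hz : z ∈ A.Iu u) (hy : y ∈ A.Pref)
    (hxy : StrColex x y) (hyz : StrColex y z) :
    y ∈ A.Iu u := by
  obtain ⟨v, hv⟩ := A.nonempty_δStar_of_mem_Pref hy
  refine ⟨hy, ?_⟩
  rcases lt_trichotomy v u with h | rfl | h
  · exact (A.mem_δStar_swap_of_strColex hxy hx.2 hv h).1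
  · exact hv
  · exact (A.mem_δStar_swap_of_strColex hyz hv hz.2 h).2
end

section
/- Over a one-letter alphabet Σ = {a}, a regular language L ⊆ {a}* is Wheeler if and only if L is finite or co-finite. -/
/-- Weak co-lexicographic order. -/
def ColexLE {α : Type*} [LinearOrder α] (x y : List α) : Prop :=
  StrColex x y ∨ x = y

/-- A sequence of strings is monotone (weakly increasing or weakly decreasing)
with respect to the co-lexicographic order. -/
def MonoColex {α : Type*} [LinearOrder α] (f : ℕ → List α) : Prop :=
  (∀ i, ColexLE (f i) (f (i + 1))) ∨ (∀ i, ColexLE (f (i + 1)) (f i))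

/-- The set of prefixes of words of `L`. -/
def PrefL {α : Type*} (L : Set (List α)) : Set (List α) := {x | ∃ y, x ++ y ∈ L}

/-- The Myhill–Nerode right congruence `≡_L`. -/
def EqL {α : Type*} (L : Set (List α)) (x y : List α) : Prop :=
  ∀ z, x ++ z ∈ L ↔ y ++ z ∈ L

/-- The sequence characterization of Wheeler languages: every monotone sequence in
`(Pref(L), ≺)` is eventually constant modulo `≡_L`. -/
def WheelerLike {α : Type*} [LinearOrder α] (L : Set (List α)) : Prop :=
  ∀ f : ℕ → List α, (∀ i, f i ∈ PrefL L) → MonoColex f →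
    ∃ n : ℕ, ∀ h k : ℕ, n ≤ h → n ≤ k → EqL L (f h) (f k)

open Filter

namespace List

theorem lex_lt_iff_length_lt {α : Type*} [Preorder α] [Subsingleton α] {l₁ l₂ : List α} :
    Lex (· < ·) l₁ l₂ ↔ l₁.length < l₂.length := by
  induction l₁ generalizing l₂ with
  | nil => cases l₂ <;> simp
  | cons a l₁ ih =>
    cases l₂ with
    | nil => simp
    | cons b l₂ => rw [Subsingleton.elim b a, lex_cons_iff, ih, length_cons, length_cons,
        Nat.succ_lt_succ_iff]

end List

theorem Monotone.exists_eventually_eq {g : ℕ → ℕ} (hg : Monotone g) (hb : BddAbove (Set.range g)) :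
    ∃ c, ∀ᶠ n in atTop, g n = c :=
  ⟨_, tendsto_pure.1 (nhds_discrete ℕ ▸ tendsto_atTop_ciSup hg hb)⟩

theorem Antitone.exists_eventually_eq {g : ℕ → ℕ} (hg : Antitone g) :
    ∃ c, ∀ᶠ n in atTop, g n = c :=
  ⟨_, tendsto_pure.1 (nhds_discrete ℕ ▸ tendsto_atTop_ciInf hg (OrderBot.bddBelow _))⟩

section Words

variable {α : Type*}

theorem Set.Finite.exists_forall_le_length_notMem {S : Set (List α)} (hS : S.Finite) :
    ∃ N, ∀ w : List α, N ≤ w.length → w ∉ S := by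
  obtain ⟨N, hN⟩ := (hS.image List.length).bddAbove
  exact ⟨N + 1, fun w hw hwS => by have := hN ⟨w, hwS, rfl⟩; omega⟩

theorem exists_eqL_of_finite_or_finite_compl {L : Set (List α)} (hL : L.Finite ∨ Lᶜ.Finite) :
    ∃ N, ∀ x y : List α, N ≤ x.length → N ≤ y.length → EqL L x y := by
  rcases hL with hL | hL <;> obtain ⟨N, hN⟩ := hL.exists_forall_le_length_notMem <;>
    refine ⟨N, fun x y hx hy z => ?_⟩
  · exact iff_of_false (hN _ (by simp; omega)) (hN _ (by simp; omega))
  · exact iff_of_true (not_not.1 (hN _ (by simp; omega))) (not_not.1 (hN _ (by simp; omega)))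

theorem exists_forall_eqL_of_eventually {L : Set (List α)} {f : ℕ → List α}
    {P : List α → Prop} (hP : ∀ x y, P x → P y → EqL L x y) (hf : ∀ᶠ i in atTop, P (f i)) :
    ∃ n, ∀ h k, n ≤ h → n ≤ k → EqL L (f h) (f k) :=
  let ⟨n, hn⟩ := eventually_atTop.1 hf
  ⟨n, fun h k hh hk => hP _ _ (hn h hh) (hn k hk)⟩

theorem finite_or_finite_compl_of_forall_mem_iff [Finite α] {L : Set (List α)} {w₀ : List α}
    (h : ∀ w : List α, w₀.length ≤ w.length → (w ∈ L ↔ w₀ ∈ L)) : L.Finite ∨ Lᶜ.Finite := by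
  by_cases hw₀ : w₀ ∈ L
  · refine Or.inr ((List.finite_length_lt α w₀.length).subset fun w hw => ?_)
    by_contra! hlen
    exact hw ((h w (not_lt.1 hlen)).2 hw₀)
  · refine Or.inl ((List.finite_length_lt α w₀.length).subset fun w hw => ?_)
    by_contra! hlen
    exact hw₀ ((h w (not_lt.1 hlen)).1 hw)

end Words

section Unary

variable {α : Type*} [Subsingleton α]

theorem mem_prefL_of_infinite {L : Set (List α)} (hL : L.Infinite) (x : List α) :
    x ∈ PrefL L := by
  obtain ⟨w, hwL, hw⟩ : ∃ w ∈ L, x.length ≤ w.length := by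
    by_contra! h
    exact hL ((List.finite_length_lt α x.length).subset h)
  refine ⟨w.drop x.length, ?_⟩
  rwa [List.length_injective (by simp; omega : (x ++ w.drop x.length).length = w.length)]

variable [LinearOrder α]

theorem strColex_iff_length_lt {x y : List α} : StrColex x y ↔ x.length < y.length := by
  rw [StrColex, List.lex_lt_iff_length_lt, List.length_reverse, List.length_reverse]

theorem colexLE_iff_length_le {x y : List α} : ColexLE x y ↔ x.length ≤ y.length := by
  rw [ColexLE, strColex_iff_length_lt, le_iff_lt_or_eq, List.length_injective.eq_iff]

theorem monoColex_iff_monotone_or_antitone {f : ℕ → List α} :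
    MonoColex f ↔ Monotone (List.length ∘ f) ∨ Antitone (List.length ∘ f) := by
  simp only [MonoColex, colexLE_iff_length_le]
  exact or_congr ⟨monotone_nat_of_le_succ, fun h n => h n.le_succ⟩
    ⟨fun h => antitone_nat_of_succ_le h, fun h n => h n.le_succ⟩

theorem wheelerLike_of_eqL_of_le_length {L : Set (List α)} {N : ℕ}
    (hN : ∀ x y : List α, N ≤ x.length → N ≤ y.length → EqL L x y) : WheelerLike L := by
  intro f _ hf
  suffices h : (∃ c, ∀ᶠ i in atTop, (f i).length = c) ∨ ∀ᶠ i in atTop, N ≤ (f i).length by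
    rcases h with ⟨c, hc⟩ | hc
    · refine exists_forall_eqL_of_eventually (P := fun x => x.length = c) (fun x y hx hy => ?_) hc
      rw [List.length_injective (hx.trans hy.symm)]
      exact fun _ => Iff.rfl
    · exact exists_forall_eqL_of_eventually hN hc
  rcases monoColex_iff_monotone_or_antitone.1 hf with hmono | hanti
  · by_cases hb : ∃ n, N ≤ (f n).length
    · obtain ⟨n, hn⟩ := hb
      exact Or.inr (eventually_atTop.2 ⟨n, fun i hi => hn.trans (hmono hi)⟩)
    · push Not at hb
      exact Or.inl (hmono.exists_eventually_eq ⟨N, by rintro _ ⟨i, rfl⟩; exact (hb i).le⟩)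
  · exact Or.inl hanti.exists_eventually_eq

end Unary

theorem finite_or_finite_compl_of_wheelerLike {α : Type*} [LinearOrder α] [Unique α]
    {L : Set (List α)} (hW : WheelerLike L) : L.Finite ∨ Lᶜ.Finite := by
  by_cases hL : L.Finite
  · exact Or.inl hL
  obtain ⟨n, hn⟩ := hW (fun i => List.replicate i default) (fun _ => mem_prefL_of_infinite hL _)
    (monoColex_iff_monotone_or_antitone.2 (Or.inl fun i j hij => by simpa using hij))
  refine finite_or_finite_compl_of_forall_mem_iff (w₀ := List.replicate n default) fun w hw => ?_
  have hw_rep : w = List.replicate w.length default :=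
    List.eq_replicate_iff.2 ⟨rfl, fun _ _ => Subsingleton.elim _ _⟩
  rw [hw_rep]
  simpa using hn w.length n (by simpa using hw) le_rfl []

theorem unary_wheeler_iff_finite_or_cofinite_general (L : Set (List Unit)) :
    WheelerLike L ↔ L.Finite ∨ (Lᶜ : Set (List Unit)).Finite := by
  refine ⟨finite_or_finite_compl_of_wheelerLike, fun hL => ?_⟩
  obtain ⟨N, hN⟩ := exists_eqL_of_finite_or_finite_compl hL
  exact wheelerLike_of_eqL_of_le_length hN

/-- Over the one-letter alphabet, a regular language is Wheeler iff it is
finite or co-finite. -/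
theorem unary_wheeler_iff_finite_or_cofinite (L : Set (List Unit))
    (hreg : ∃ (σ : Type) (_ : Fintype σ) (M : DFA Unit σ), M.accepts = L) :
    WheelerLike L ↔ L.Finite ∨ (Lᶜ : Set (List Unit)).Finite :=
  unary_wheeler_iff_finite_or_cofinite_general L
end

section
/- The language {a^{2i+1} : i ≥ 0} of odd-length strings over the unary alphabet {a} is not Wheeler. -/
theorem strColex_cons_self {α : Type*} [LinearOrder α] (a : α) (x : List α) :
    StrColex x (a :: x) := by
  rw [StrColex, List.reverse_cons]
  simpa only [List.append_nil] using List.Lex.append_left _ (List.Lex.nil (a := a)) x.reverse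

theorem monoColex_replicate {α : Type*} [LinearOrder α] (a : α) :
    MonoColex fun n => List.replicate n a :=
  .inl fun n => .inl (strColex_cons_self a (List.replicate n a))

theorem EqL.mem_iff {α : Type*} {L : Set (List α)} {x y : List α} (h : EqL L x y) :
    x ∈ L ↔ y ∈ L := by
  simpa using h []

theorem mem_prefL_odd_length {α : Type*} (a : α) (x : List α) :
    x ∈ PrefL {w : List α | Odd w.length} :=
  ⟨x ++ [a], by simp⟩

theorem not_wheelerLike_of_not_eqL_succ {α : Type*} [LinearOrder α] {L : Set (List α)}
    (f : ℕ → List α) (hpref : ∀ n, f n ∈ PrefL L) (hmono : MonoColex f)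
    (hsep : ∀ n, ¬ EqL L (f n) (f (n + 1))) : ¬ WheelerLike L := fun hW => by
  obtain ⟨n, hn⟩ := hW f hpref hmono
  exact hsep n (hn n (n + 1) le_rfl n.le_succ)

/-- The unary language of odd-length strings `{a^(2i+1) : i ≥ 0}` is not Wheeler. -/
theorem odd_unary_not_wheeler :
    ¬ WheelerLike {w : List Unit | Odd w.length} := by
  refine not_wheelerLike_of_not_eqL_succ (fun n => List.replicate n ())
    (fun n => mem_prefL_odd_length () _) (monoColex_replicate ()) fun n h => ?_
  -- consecutive lengths have opposite parity, so the empty suffix separates them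
  simpa [← Nat.not_even_iff_odd, Nat.even_add_one] using h.mem_iff
end

section
/- The intersection of two Wheeler languages is Wheeler: if L₁ and L₂ satisfy that every monotone sequence in (Pref(Lᵢ), ≺) is eventually constant modulo ≡_{Lᵢ}, then every monotone sequence in (Pref(L₁ ∩ L₂), ≺) is eventually constant modulo ≡_{L₁ ∩ L₂}. -/
/-!
A monotone sequence in `Pref(L₁ ∩ L₂)` is monotone in both `Pref(L₁)` and `Pref(L₂)`, so from
some index on its terms are pairwise `≡_{L₁}`- and `≡_{L₂}`-equivalent; and `≡_{L₁} ∩ ≡_{L₂}`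
refines `≡_{L₁ ∩ L₂}`.
-/

section

variable {α : Type*}

theorem PrefL_mono {L L' : Set (List α)} (h : L ⊆ L') : PrefL L ⊆ PrefL L' :=
  fun _ ⟨y, hy⟩ => ⟨y, h hy⟩

theorem EqL.inter {L₁ L₂ : Set (List α)} {x y : List α} (h₁ : EqL L₁ x y) (h₂ : EqL L₂ x y) :
    EqL (L₁ ∩ L₂) x y :=
  fun z => and_congr (h₁ z) (h₂ z)

end

theorem wheeler_inter_general {α : Type*} [LinearOrder α]
    (L₁ L₂ : Set (List α)) (h₁ : WheelerLike L₁) (h₂ : WheelerLike L₂) :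
    WheelerLike (L₁ ∩ L₂) := by
  intro f hf hmono
  obtain ⟨n₁, hn₁⟩ := h₁ f (fun i => PrefL_mono Set.inter_subset_left (hf i)) hmono
  obtain ⟨n₂, hn₂⟩ := h₂ f (fun i => PrefL_mono Set.inter_subset_right (hf i)) hmono
  refine ⟨max n₁ n₂, fun h k hh hk => EqL.inter ?_ ?_⟩
  · exact hn₁ h k (le_of_max_le_left hh) (le_of_max_le_left hk)
  · exact hn₂ h k (le_of_max_le_right hh) (le_of_max_le_right hk)

/-- The intersection of two Wheeler languages is Wheeler. -/
theorem wheeler_inter {α : Type*} [Fintype α] [LinearOrder α]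
    (L₁ L₂ : Set (List α)) (h₁ : WheelerLike L₁) (h₂ : WheelerLike L₂) :
    WheelerLike (L₁ ∩ L₂) :=
  wheeler_inter_general L₁ L₂ h₁ h₂
end

section
/- Let α₁, α, α₂ ∈ Σ* with α non-empty. If α is not primitive (i.e., α = β^k for some non-empty β and k > 1), then the language α₁ · α* · α₂ = {α₁ αⁿ α₂ : n ≥ 0} is not Wheeler. -/
/-- `w^n`: the `n`-th power of a word. -/
def wordPow {α : Type*} (w : List α) : ℕ → List α
  | 0 => []
  | n + 1 => w ++ wordPow w n

section WordPow

variable {α : Type*}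

lemma wordPow_add (w : List α) (m n : ℕ) :
    wordPow w (m + n) = wordPow w m ++ wordPow w n := by
  induction m with
  | zero => simp [wordPow]
  | succ m ih => rw [Nat.add_right_comm, wordPow, ih, wordPow, List.append_assoc]

lemma length_wordPow (w : List α) (n : ℕ) : (wordPow w n).length = n * w.length := by
  induction n with
  | zero => simp [wordPow]
  | succ n ih => simp [wordPow, ih, Nat.succ_mul, Nat.add_comm]

lemma wordPow_injective {w : List α} (hw : w ≠ []) : Function.Injective (wordPow w) :=
  fun m n h => by
    have := congrArg List.length h
    rw [length_wordPow, length_wordPow] at this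
    exact Nat.eq_of_mul_eq_mul_right (List.length_pos_iff.mpr hw) this

lemma wordPow_wordPow (w : List α) (k n : ℕ) :
    wordPow (wordPow w k) n = wordPow w (k * n) := by
  induction n with
  | zero => rfl
  | succ n ih => rw [wordPow, ih, ← wordPow_add, Nat.mul_succ, Nat.add_comm]

end WordPow

section Colex

variable {α : Type*} [LinearOrder α]

lemma StrColex.append_right {x y : List α} (h : StrColex x y) (w : List α) :
    StrColex (x ++ w) (y ++ w) := by
  unfold StrColex at *
  simpa only [List.reverse_append] using List.Lex.append_left _ h w.reverse

/-- Since `u ++ v ^ (i + 1) = u ++ v ++ v ^ i`, cancelling the common suffix `v ^ i` makes every pair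
of consecutive terms compare as `u` and `u ++ v` do. -/
lemma monoColex_append_wordPow (u : List α) {v : List α} (hv : v ≠ []) :
    MonoColex fun i => u ++ wordPow v i := by
  have hsucc (i : ℕ) : u ++ wordPow v (i + 1) = u ++ v ++ wordPow v i := by
    rw [wordPow, List.append_assoc]
  rcases trichotomous_of (List.Lex (· < ·)) u.reverse (u ++ v).reverse with hlt | heq | hgt
  · exact .inl fun i => .inl (by simpa only [hsucc] using StrColex.append_right hlt (wordPow v i))
  · exact absurd (by simpa using congrArg List.length heq) hv
  · exact .inr fun i => .inl (by simpa only [hsucc] using StrColex.append_right hgt (wordPow v i))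

end Colex

section PowLanguage

variable {α : Type*}

def powLanguage (w₁ a w₂ : List α) : Set (List α) := {w | ∃ n, w = w₁ ++ wordPow a n ++ w₂}

lemma append_wordPow_append_mem_powLanguage_iff (w₁ w₂ : List α) {b : List α} (hb : b ≠ [])
    (k i : ℕ) : w₁ ++ wordPow b i ++ w₂ ∈ powLanguage w₁ (wordPow b k) w₂ ↔ k ∣ i := by
  simp only [powLanguage, Set.mem_ofPred_eq, wordPow_wordPow, List.append_cancel_right_eq,
    List.append_cancel_left_eq, (wordPow_injective hb).eq_iff, Dvd.dvd]

lemma append_wordPow_mem_prefL (w₁ w₂ b : List α) {k : ℕ} (hk : 0 < k) (i : ℕ) :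
    w₁ ++ wordPow b i ∈ PrefL (powLanguage w₁ (wordPow b k) w₂) := by
  refine ⟨wordPow b (k * i - i) ++ w₂, i, ?_⟩
  rw [wordPow_wordPow, ← List.append_assoc, List.append_assoc w₁, ← wordPow_add,
    Nat.add_sub_cancel' (Nat.le_mul_of_pos_left i hk)]

end PowLanguage

theorem not_wheeler_of_not_primitive_general {α : Type*} [LinearOrder α]
    (w₁ a w₂ : List α)
    (hnp : ∃ (b : List α) (k : ℕ), b ≠ [] ∧ 1 < k ∧ a = wordPow b k) :
    ¬ WheelerLike {w : List α | ∃ n : ℕ, w = w₁ ++ wordPow a n ++ w₂} := by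
  obtain ⟨b, k, hb, hk, rfl⟩ := hnp
  change ¬ WheelerLike (powLanguage w₁ (wordPow b k) w₂)
  intro hW
  obtain ⟨n, hn⟩ := hW (fun i => w₁ ++ wordPow b i)
    (append_wordPow_mem_prefL w₁ w₂ b (by omega)) (monoColex_append_wordPow w₁ hb)
  have hnk : n ≤ n * k := Nat.le_mul_of_pos_right n (by omega)
  -- `w₂` completes `w₁ b^(nk)` into the language but not `w₁ b^(nk+1)`.
  have hiff := hn (n * k) (n * k + 1) hnk (by omega) w₂
  rw [append_wordPow_append_mem_powLanguage_iff w₁ w₂ hb,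
    append_wordPow_append_mem_powLanguage_iff w₁ w₂ hb] at hiff
  have hdvd : k ∣ n * k := Dvd.intro_left n rfl
  have hdvd_one : k ∣ 1 := (Nat.dvd_add_right hdvd).mp (hiff.mp hdvd)
  exact absurd (Nat.le_of_dvd one_pos hdvd_one) (by omega)

/-- If `a` is a non-empty word that is not primitive (i.e. `a = b^k` for some non-empty
`b` and `k > 1`), then the language `α₁ · a* · α₂` is not Wheeler. -/
theorem not_wheeler_of_not_primitive {α : Type*} [Fintype α] [LinearOrder α]
    (w₁ a w₂ : List α) (ha : a ≠ [])
    (hnp : ∃ (b : List α) (k : ℕ), b ≠ [] ∧ 1 < k ∧ a = wordPow b k) :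
    ¬ WheelerLike {w : List α | ∃ n : ℕ, w = w₁ ++ wordPow a n ++ w₂} :=
  not_wheeler_of_not_primitive_general w₁ a w₂ hnp
end

section
/- For any two strings α₀ ⪯ α₁ in Σ⁺, the co-lexicographic open interval (α₀, α₁) = {β ∈ Σ* : α₀ ≺ β ≺ α₁} is a Wheeler language; in particular, the downward set (−∞, α₁) = {β : β ≺ α₁} equals Σ⁺·F ∪ {γ : γ ≺ α₁, |γ| ≤ |α₁|} where F = {β : β ≺ α₁, |β| = |α₁|}. -/
theorem Monotone.exists_forall_eq_of_finite_range {β : Type*} [PartialOrder β] {g : ℕ → β}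
    (hg : Monotone g) (hfin : (Set.range g).Finite) : ∃ N, ∀ k, N ≤ k → g k = g N := by
  obtain ⟨_, ⟨N, rfl⟩, hmax⟩ := hfin.exists_maximalFor id _ ⟨g 0, 0, rfl⟩
  exact ⟨N, fun k hk => le_antisymm (hmax ⟨k, rfl⟩ (hg hk)) (hg hk)⟩

theorem Antitone.exists_forall_eq_of_finite_range {β : Type*} [PartialOrder β] {g : ℕ → β}
    (hg : Antitone g) (hfin : (Set.range g).Finite) : ∃ N, ∀ k, N ≤ k → g k = g N :=
  hg.dual_right.exists_forall_eq_of_finite_range hfin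

namespace List

theorem take_append_eq_take_append {β : Type*} {u v : List β} {m : ℕ} (s : List β)
    (h : u.take m = v.take m) : (s ++ u).take m = (s ++ v).take m := by
  rw [take_append, take_append, ← min_eq_left (m.sub_le s.length), ← take_take, h, take_take]

variable {α : Type*} [LinearOrder α]

theorem take_le_take_of_le (k : ℕ) {u v : List α} (h : u ≤ v) : u.take k ≤ v.take k := by
  induction k generalizing u v with
  | zero => simp
  | succ k ih =>
    cases u with
    | nil => exact not_lt.mp (not_lt_nil _)
    | cons a u =>
      cases v with
      | nil => exact absurd (h.lt_of_ne (by simp)) (not_lt_nil _)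
      | cons b v =>
        obtain h | h := h.lt_or_eq
        · obtain hab | ⟨rfl, huv⟩ := cons_lt_cons_iff.mp h
          · exact (cons_lt_cons_iff.mpr (.inl hab)).le
          · exact cons_le_cons a (ih huv.le)
        · rw [h]

theorem append_lt_iff_of_length_le {p a : List α} (s : List α) (h : a.length ≤ p.length) :
    p ++ s < a ↔ p < a := by
  induction a generalizing p with
  | nil => simp
  | cons b a ih =>
    cases p with
    | nil => simp at h
    | cons c p => simp only [cons_append, cons_lt_cons_iff, ih (by simpa using h)]

theorem take_lt_iff {a u : List α} {m : ℕ} (ha : a.length ≤ m) (hu : m ≤ u.length) :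
    u.take m < a ↔ u < a := by
  conv_rhs => rw [← take_append_drop m u]
  exact (append_lt_iff_of_length_le _ (by simpa [hu] using ha)).symm

theorem lt_iff_le_take {a u : List α} {m : ℕ} (ha : a.length ≤ m) (hu : m < u.length) :
    a < u ↔ a ≤ u.take m := by
  rw [← not_le, (ne_of_apply_ne length (by omega)).le_iff_lt, ← take_lt_iff ha hu.le, not_lt]

end List

section Colex

open List

variable {α : Type*} [LinearOrder α]

theorem strColex_iff_reverse_lt {x y : List α} : StrColex x y ↔ x.reverse < y.reverse := Iff.rfl

theorem colexLE_iff_reverse_le {x y : List α} : ColexLE x y ↔ x.reverse ≤ y.reverse := by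
  rw [le_iff_lt_or_eq, reverse_inj]
  rfl

theorem strColex_append_left_iff (x : List α) {f a : List α} (h : a.length ≤ f.length) :
    StrColex (x ++ f) a ↔ StrColex f a := by
  simp only [strColex_iff_reverse_lt, reverse_append]
  exact append_lt_iff_of_length_le _ (by simpa using h)

theorem wheelerLike_of_eqL_of_take_reverse_eq [Finite α] {L : Set (List α)} (m : ℕ)
    (hL : ∀ x y : List α, m < x.length → m < y.length →
      x.reverse.take m = y.reverse.take m → EqL L x y) :
    WheelerLike L := by
  intro f _ hf
  let c : ℕ → List α := fun i => (f i).reverse.take (m + 1)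
  have hc_mono : Monotone c ∨ Antitone c := by
    refine hf.imp (fun hf => monotone_nat_of_le_succ fun i => ?_)
      (fun hf => antitone_nat_of_succ_le fun i => ?_) <;>
    exact take_le_take_of_le _ (colexLE_iff_reverse_le.mp (hf i))
  have hc_fin : (Set.range c).Finite :=
    (finite_length_le α (m + 1)).subset (by rintro _ ⟨i, rfl⟩; simp [c])
  obtain ⟨N, hN⟩ := hc_mono.elim (·.exists_forall_eq_of_finite_range hc_fin)
    (·.exists_forall_eq_of_finite_range hc_fin)
  refine ⟨N, fun h k hh hk => ?_⟩
  rcases (c N).length.lt_or_ge (m + 1) with hshort | hlong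
  · have hconst : ∀ i, N ≤ i → f i = (c N).reverse := fun i hi => by
      have hci : (c i).length < m + 1 := hN i hi ▸ hshort
      rw [← hN i hi]
      change f i = ((f i).reverse.take (m + 1)).reverse
      rw [take_of_length_le (by simp only [c, length_take, length_reverse] at hci ⊢; omega),
        reverse_reverse]
    rw [hconst h hh, hconst k hk]
    exact fun _ => Iff.rfl
  · have hlong' : ∀ i, N ≤ i → m < (f i).length ∧ (f i).reverse.take m = (c N).take m :=
      fun i hi => by
        have hci : m + 1 ≤ (c i).length := hN i hi ▸ hlong
        refine ⟨by simpa [c] using hci, ?_⟩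
        rw [← hN i hi, take_take, min_eq_left m.le_succ]
    obtain ⟨hlen_h, htake_h⟩ := hlong' h hh
    obtain ⟨hlen_k, htake_k⟩ := hlong' k hk
    exact hL _ _ hlen_h hlen_k (htake_h.trans htake_k.symm)

theorem eqL_colexInterval_of_take_reverse_eq (a₀ a₁ : List α) {m : ℕ}
    (h₀ : a₀.length ≤ m) (h₁ : a₁.length ≤ m) {x y : List α}
    (hx : m < x.length) (hy : m < y.length) (h : x.reverse.take m = y.reverse.take m) :
    EqL {b | StrColex a₀ b ∧ StrColex b a₁} x y := by
  replace h₀ : a₀.reverse.length ≤ m := by simpa using h₀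
  replace h₁ : a₁.reverse.length ≤ m := by simpa using h₁
  intro z
  have hxz : m < (x ++ z).reverse.length := by simp; omega
  have hyz : m < (y ++ z).reverse.length := by simp; omega
  have htake : (x ++ z).reverse.take m = (y ++ z).reverse.take m := by
    simpa only [reverse_append] using take_append_eq_take_append z.reverse h
  simp only [Set.mem_ofPred_eq, strColex_iff_reverse_lt]
  rw [lt_iff_le_take h₀ hxz, ← take_lt_iff h₁ hxz.le, lt_iff_le_take h₀ hyz,
    ← take_lt_iff h₁ hyz.le, htake]

theorem setOf_strColex_eq (a : List α) :
    {b : List α | StrColex b a} =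
      {w : List α | ∃ x f : List α, x ≠ [] ∧
          (StrColex f a ∧ f.length = a.length) ∧ w = x ++ f} ∪
      {g : List α | StrColex g a ∧ g.length ≤ a.length} := by
  ext b
  simp only [Set.mem_ofPred_eq, Set.mem_union]
  constructor
  · intro hb
    by_cases hlen : b.length ≤ a.length
    · exact .inr ⟨hb, hlen⟩
    · set k := b.length - a.length with hk
      have hdrop : (b.drop k).length = a.length := by simp only [length_drop]; omega
      refine .inl ⟨b.take k, b.drop k, ?_, ⟨?_, hdrop⟩, (take_append_drop k b).symm⟩
      · rw [← length_pos_iff, length_take]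
        omega
      · rwa [← strColex_append_left_iff (b.take k) hdrop.ge, take_append_drop]
  · rintro (⟨x, f, -, ⟨hf, hlen⟩, rfl⟩ | ⟨hb, -⟩)
    · exact (strColex_append_left_iff x hlen.ge).mpr hf
    · exact hb

end Colex

theorem interval_wheeler_general {α : Type*} [Fintype α] [LinearOrder α]
    (a₀ a₁ : List α) :
    WheelerLike {b : List α | StrColex a₀ b ∧ StrColex b a₁} ∧
    {b : List α | StrColex b a₁} =
      {w : List α | ∃ x f : List α, x ≠ [] ∧
          (StrColex f a₁ ∧ f.length = a₁.length) ∧ w = x ++ f} ∪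
      {g : List α | StrColex g a₁ ∧ g.length ≤ a₁.length} :=
  ⟨wheelerLike_of_eqL_of_take_reverse_eq (max a₀.length a₁.length) fun _ _ hx hy h =>
      eqL_colexInterval_of_take_reverse_eq a₀ a₁ (le_max_left _ _) (le_max_right _ _) hx hy h,
    setOf_strColex_eq a₁⟩

/-- For non-empty words `a₀ ⪯ a₁`, the open co-lexicographic interval `(a₀, a₁)` is a
Wheeler language; moreover the downward set `(−∞, a₁)` decomposes as
`Σ⁺·F ∪ {γ : γ ≺ a₁, |γ| ≤ |a₁|}` where `F = {β : β ≺ a₁, |β| = |a₁|}`. -/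
theorem interval_wheeler {α : Type*} [Fintype α] [LinearOrder α]
    (a₀ a₁ : List α) (h₀ : a₀ ≠ []) (h₁ : a₁ ≠ []) (hle : ColexLE a₀ a₁) :
    WheelerLike {b : List α | StrColex a₀ b ∧ StrColex b a₁} ∧
    {b : List α | StrColex b a₁} =
      {w : List α | ∃ x f : List α, x ≠ [] ∧
          (StrColex f a₁ ∧ f.length = a₁.length) ∧ w = x ++ f} ∪
      {g : List α | StrColex g a₁ ∧ g.length ≤ a₁.length} :=
  interval_wheeler_general a₀ a₁
end
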